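/- arXiv:math/0402009 — 3 statements merged into one kernel-verified Lean document; each statement's English description precedes it below -/
import Mathlib

section
/- Let A be an N×N nonnegative real matrix, G a subgroup of Aut(A), and Â the induced orbit matrix (Â_{αβ} = Σ_{j∈β} a_{ij} for i ∈ α). Then the spectral radii coincide: ρ(Â) = ρ(A). -/
/-!
Since `Ahat (orb i) β` is the sum of row `i` of `A` over the fibre `β`, the same holds for all
powers: `(Ahat ^ n) (orb i) β = ∑_{orb j = β} (A ^ n) i j`. For nonnegative `A` the row sums
of `Ahat ^ n` are therefore exactly those of `A ^ n`, so the two powers have the same `ℓ∞`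
operator norm for every `n`, and Gelfand's formula `ρ(M) = lim ‖M ^ n‖ ^ (1 / n)` gives
`ρ(Ahat) = ρ(A)`.
-/

noncomputable def specRad (N : ℕ) (M : Matrix (Fin N) (Fin N) ℝ) : ℝ :=
  sSup ((fun z : ℂ => ‖z‖) '' spectrum ℂ (M.map (fun x => (x : ℂ))))

open Finset Matrix
open scoped NNReal ENNReal

attribute [local instance] Matrix.linftyOpSeminormedAddCommGroup Matrix.linftyOpNormedRing
  Matrix.linftyOpNormedAlgebra

theorem sSup_norm_spectrum_eq_toReal_spectralRadius {𝕜 A : Type*} [NormedField 𝕜] [Ring A]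
    [Algebra 𝕜 A] (a : A) :
    sSup ((fun k : 𝕜 => ‖k‖) '' spectrum 𝕜 a) = (spectralRadius 𝕜 a).toReal := by
  rw [spectralRadius, ← sSup_image, ENNReal.toReal_sSup _ (by simp), Set.image_image]
  simp

theorem spectralRadius_eq_of_nnnorm_pow_eq {A B : Type*}
    [NormedRing A] [NormedAlgebra ℂ A] [CompleteSpace A]
    [NormedRing B] [NormedAlgebra ℂ B] [CompleteSpace B] {a : A} {b : B}
    (h : ∀ n : ℕ, ‖a ^ n‖₊ = ‖b ^ n‖₊) : spectralRadius ℂ a = spectralRadius ℂ b :=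
  tendsto_nhds_unique (by simpa only [h] using spectrum.gelfand_formula a)
    (spectrum.gelfand_formula b)

namespace Matrix

variable {ι ι' κ κ' : Type*} [Fintype ι] [Fintype ι'] [Fintype κ] [Fintype κ']

theorem pow_apply_eq_sum_fiber {R : Type*} [Semiring R] [DecidableEq ι] [DecidableEq κ]
    {A : Matrix ι ι R} {B : Matrix κ κ R} {p : ι → κ}
    (hB : ∀ i β, B (p i) β = ∑ j with p j = β, A i j) (n : ℕ) (i : ι) (β : κ) :
    (B ^ n) (p i) β = ∑ j with p j = β, (A ^ n) i j := by
  induction n generalizing i with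
  | zero => simp [one_apply]
  | succ n ih =>
    calc (B ^ (n + 1)) (p i) β
        = ∑ γ, ∑ k with p k = γ, A i k * (B ^ n) (p k) β := by
          rw [pow_succ', mul_apply]
          refine sum_congr rfl fun γ _ => ?_
          rw [hB, sum_mul]
          exact sum_congr rfl fun k hk => by rw [(mem_filter.mp hk).2]
      _ = ∑ k, ∑ j with p j = β, A i k * (A ^ n) k j := by
          simp_rw [sum_fiberwise, ih, mul_sum]
      _ = ∑ j with p j = β, (A ^ (n + 1)) i j := by
          rw [sum_comm]
          simp only [pow_succ', mul_apply]

theorem linfty_opNNNorm_map {α β : Type*}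
    [SeminormedAddCommGroup α] [SeminormedAddCommGroup β]
    (M : Matrix ι ι' α) (f : α → β) (hf : ∀ x, ‖f x‖₊ = ‖x‖₊) : ‖M.map f‖₊ = ‖M‖₊ := by
  simp only [linfty_opNNNorm_def, map_apply, hf]

theorem linfty_opNNNorm_eq_of_sum_fiber [DecidableEq κ'] {M : Matrix ι ι' ℝ}
    {N : Matrix κ κ' ℝ} {p : ι → κ} {q : ι' → κ'} (hp : Function.Surjective p)
    (hM : ∀ i j, 0 ≤ M i j) (hN : ∀ i β, N (p i) β = ∑ j with q j = β, M i j) :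
    ‖N‖₊ = ‖M‖₊ := by
  have row_sum : ∀ i, ∑ β, ‖N (p i) β‖₊ = ∑ j, ‖M i j‖₊ := fun i => by
    rw [← sum_fiberwise univ q]
    refine sum_congr rfl fun β _ => NNReal.eq ?_
    push_cast
    rw [hN, Real.norm_of_nonneg (sum_nonneg fun j _ => hM i j)]
    exact sum_congr rfl fun j _ => (Real.norm_of_nonneg (hM i j)).symm
  classical
  rw [linfty_opNNNorm_def, linfty_opNNNorm_def, ← image_univ_of_surjective hp, sup_image]
  exact sup_congr rfl fun i _ => row_sum i

end Matrix

theorem stmt4_general (N : ℕ) (A : Matrix (Fin N) (Fin N) ℝ) (hnn : ∀ i j, 0 ≤ A i j)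
    (O : Type) [Fintype O] [DecidableEq O]
    (orb : Fin N → O) (horbsurj : Function.Surjective orb)
    (Ahat : Matrix O O ℝ)
    (hAhat : ∀ (i : Fin N) (β : O),
      Ahat (orb i) β = ∑ j ∈ Finset.univ.filter (fun j => orb j = β), A i j) :
    sSup ((fun z : ℂ => ‖z‖) '' spectrum ℂ (Ahat.map (fun x => (x : ℂ))))
      = specRad N A := by
  have norm_pow_eq : ∀ n : ℕ,
      ‖Ahat.map (fun x => (x : ℂ)) ^ n‖₊ = ‖A.map (fun x => (x : ℂ)) ^ n‖₊ := fun n => by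
    change ‖Ahat.map Complex.ofRealHom ^ n‖₊ = ‖A.map Complex.ofRealHom ^ n‖₊
    rw [← Matrix.map_pow, ← Matrix.map_pow,
      linfty_opNNNorm_map _ Complex.ofRealHom Complex.nnnorm_real,
      linfty_opNNNorm_map _ Complex.ofRealHom Complex.nnnorm_real]
    exact linfty_opNNNorm_eq_of_sum_fiber horbsurj (pow_apply_nonneg hnn n)
      (pow_apply_eq_sum_fiber hAhat n)
  rw [specRad, sSup_norm_spectrum_eq_toReal_spectralRadius,
    sSup_norm_spectrum_eq_toReal_spectralRadius, spectralRadius_eq_of_nnnorm_pow_eq norm_pow_eq]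

/-- Let `A` be an `N × N` nonnegative real matrix, `G` a subgroup of `Aut(A)`, and
`Ahat` the induced orbit matrix (`Ahat α β = ∑_{j : orb j = β} A i j` for `i` in orbit
`α`).  Then the spectral radii coincide: `ρ(Ahat) = ρ(A)`. -/
theorem stmt4 (N : ℕ) (A : Matrix (Fin N) (Fin N) ℝ) (hnn : ∀ i j, 0 ≤ A i j)
    (G : Subgroup (Equiv.Perm (Fin N)))
    (hG : ∀ π ∈ G, ∀ i j, A (π i) (π j) = A i j)
    (O : Type) [Fintype O] [DecidableEq O]
    (orb : Fin N → O) (horbsurj : Function.Surjective orb)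
    (horb : ∀ i j, orb i = orb j ↔ ∃ π ∈ G, π i = j)
    (Ahat : Matrix O O ℝ)
    (hAhat : ∀ (i : Fin N) (β : O),
      Ahat (orb i) β = ∑ j ∈ Finset.univ.filter (fun j => orb j = β), A i j) :
    sSup ((fun z : ℂ => ‖z‖) '' spectrum ℂ (Ahat.map (fun x => (x : ℂ))))
      = specRad N A :=
  stmt4_general N A hnn O orb horbsurj Ahat hAhat
end

section
/- The function λ_1(p) = (1−p/2)log(1−p/2) − (p/2)log(p/2) − (1−p)log(1−p) on [0,1] attains its maximum at p = 1 − 1/√5, and the maximum value equals log((1+√5)/2). -/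
/-!
Write `λ₁(p) = a log a - b log b - c log c` with `b = p/2`, `c = 1 - p` and `a = b + c`.
For any weights `u, v > 0` with `u + v = 1`, Gibbs' inequality bounds this by the cross entropy
`-(b log u + c log v)`, with equality when `(b, c)` is proportional to `(u, v)`. Choosing
`(u, v) = (φ⁻², φ⁻¹)`, which sums to `1` because `φ² = φ + 1`, the cross entropy becomes
`(2b + c) log φ = log φ`, and the proportionality condition singles out `p = 1 - 1/√5`.
-/

/-- The one-dimensional monomer-dimer entropy function with dimer density `p`,
`λ₁(p) = (1-p/2)log(1-p/2) - (p/2)log(p/2) - (1-p)log(1-p)`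
(with the convention `log 0 = 0`, giving the continuous extension with
`λ₁(0) = λ₁(1) = 0`). -/
noncomputable def lambdaOne (p : ℝ) : ℝ :=
  (1 - p / 2) * Real.log (1 - p / 2) - (p / 2) * Real.log (p / 2)
    - (1 - p) * Real.log (1 - p)

open Real goldenRatio

lemma sub_le_mul_log_sub_mul_log {x y : ℝ} (hx : 0 ≤ x) (hy : 0 < y) :
    x - y ≤ x * log x - x * log y := by
  rcases hx.eq_or_lt with rfl | hx
  · simpa using hy.le
  have hlog : log y - log x ≤ y / x - 1 := by
    rw [← log_div hy.ne' hx.ne']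
    exact log_le_sub_one_of_pos (div_pos hy hx)
  have hscaled := mul_le_mul_of_nonneg_left hlog hx.le
  have hrhs : x * (y / x - 1) = y - x := by field_simp
  linarith

noncomputable def splitEntropy (b c : ℝ) : ℝ :=
  (b + c) * log (b + c) - b * log b - c * log c

lemma splitEntropy_le {b c u v : ℝ} (hb : 0 ≤ b) (hc : 0 ≤ c) (hu : 0 < u) (hv : 0 < v)
    (huv : u + v = 1) : splitEntropy b c ≤ -(b * log u + c * log v) := by
  rcases (add_nonneg hb hc).eq_or_lt with habc | habc
  · obtain ⟨rfl, rfl⟩ : b = 0 ∧ c = 0 := ⟨by linarith, by linarith⟩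
    simp [splitEntropy]
  have gibbs_b := sub_le_mul_log_sub_mul_log hb (mul_pos habc hu)
  have gibbs_c := sub_le_mul_log_sub_mul_log hc (mul_pos habc hv)
  rw [log_mul habc.ne' hu.ne'] at gibbs_b
  rw [log_mul habc.ne' hv.ne'] at gibbs_c
  have hmass : (b + c) * u + (b + c) * v = b + c := by rw [← mul_add, huv, mul_one]
  unfold splitEntropy
  linarith

lemma splitEntropy_eq_of_eq_mul {b c u v : ℝ} (hu : 0 < u) (hv : 0 < v) (habc : 0 < b + c)
    (hbu : b = (b + c) * u) (hcv : c = (b + c) * v) :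
    splitEntropy b c = -(b * log u + c * log v) := by
  have hlog_b : b * log b = b * log (b + c) + b * log u := by
    conv_lhs => rw [hbu]
    rw [log_mul habc.ne' hu.ne', ← hbu]
    ring
  have hlog_c : c * log c = c * log (b + c) + c * log v := by
    conv_lhs => rw [hcv]
    rw [log_mul habc.ne' hv.ne', ← hcv]
    ring
  unfold splitEntropy
  rw [hlog_b, hlog_c]
  ring

lemma lambdaOne_eq_splitEntropy (p : ℝ) : lambdaOne p = splitEntropy (p / 2) (1 - p) := by
  rw [splitEntropy, show p / 2 + (1 - p) = 1 - p / 2 by ring, lambdaOne]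

lemma inv_goldenRatio_sq_add_inv_goldenRatio : φ⁻¹ ^ 2 + φ⁻¹ = 1 := by
  calc φ⁻¹ ^ 2 + φ⁻¹ = (φ + 1) / φ ^ 2 := by field_simp; ring
    _ = 1 := by rw [← goldenRatio_sq, div_self (pow_ne_zero 2 goldenRatio_ne_zero)]

lemma neg_mul_log_inv_goldenRatio (b c : ℝ) :
    -(b * log (φ⁻¹ ^ 2) + c * log φ⁻¹) = (2 * b + c) * log φ := by
  rw [log_pow, log_inv]
  push_cast
  ring

lemma lambdaOne_le_log_goldenRatio {p : ℝ} (hp : p ∈ Set.Icc (0 : ℝ) 1) :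
    lambdaOne p ≤ log φ := by
  obtain ⟨hp0, hp1⟩ := hp
  calc lambdaOne p
      ≤ -(p / 2 * log (φ⁻¹ ^ 2) + (1 - p) * log φ⁻¹) := by
        rw [lambdaOne_eq_splitEntropy]
        exact splitEntropy_le (by linarith) (by linarith) (by positivity)
          (inv_pos.2 goldenRatio_pos) inv_goldenRatio_sq_add_inv_goldenRatio
    _ = log φ := by rw [neg_mul_log_inv_goldenRatio]; ring

lemma lambdaOne_one_sub_inv_sqrt_five : lambdaOne (1 - 1 / √5) = log φ := by
  have hsq : √5 ^ 2 = 5 := sq_sqrt (by norm_num)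
  have hmass : (1 - 1 / √5) / 2 + (1 - (1 - 1 / √5)) = φ / √5 := by
    field_simp
    ring
  calc lambdaOne (1 - 1 / √5)
      = -((1 - 1 / √5) / 2 * log (φ⁻¹ ^ 2) + (1 - (1 - 1 / √5)) * log φ⁻¹) := by
        rw [lambdaOne_eq_splitEntropy]
        refine splitEntropy_eq_of_eq_mul (by positivity) (inv_pos.2 goldenRatio_pos)
          (by rw [hmass]; positivity) ?_ ?_ <;>
        · rw [hmass]
          field_simp
          linarith
    _ = log φ := by rw [neg_mul_log_inv_goldenRatio]; ring

/-- `λ₁` attains its maximum over `[0,1]` at `p = 1 - 1/√5`, with maximum value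
`log((1+√5)/2)`. -/
theorem stmt11 :
    (1 - 1 / Real.sqrt 5) ∈ Set.Icc (0 : ℝ) 1 ∧
    IsMaxOn lambdaOne (Set.Icc (0 : ℝ) 1) (1 - 1 / Real.sqrt 5) ∧
    lambdaOne (1 - 1 / Real.sqrt 5) = Real.log ((1 + Real.sqrt 5) / 2) := by
  have hinv_le_one : 1 / √5 ≤ 1 := by
    rw [div_le_one (by positivity), one_le_sqrt]
    norm_num
  refine ⟨⟨by linarith, by linarith [one_div_nonneg.2 (sqrt_nonneg 5)]⟩, fun p hp => ?_,
    lambdaOne_one_sub_inv_sqrt_five⟩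
  rw [Set.mem_ofPred_eq, lambdaOne_one_sub_inv_sqrt_five]
  exact lambdaOne_le_log_goldenRatio hp
end

section
/- Fix d ≥ 1 and p ∈ [0,1]. Then (1/(2n)) log [ C(n, ⌊pn⌋)^2 · (⌊pn⌋)! · (2d/n)^{⌊pn⌋} ] converges as n → ∞ to (1/2)( −p log p − 2(1−p)log(1−p) + p log(2d) − p ), with the conventions 0 log 0 = 0. -/
open Filter Real

lemma SL : Filter.Tendsto (fun m : ℕ => (Real.log m.factorial - m * Real.log m + m) / m)
    Filter.atTop (nhds 0) := by
  have hpi : (0:ℝ) < Real.sqrt Real.pi := Real.sqrt_pos.2 Real.pi_pos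
  have h1 : Tendsto (fun m : ℕ => Real.log (Stirling.stirlingSeq m)) atTop (nhds (Real.log (Real.sqrt Real.pi))) :=
    ((Real.continuousAt_log hpi.ne').tendsto).comp Stirling.tendsto_stirlingSeq_sqrt_pi
  have h2 : Tendsto (fun m : ℕ => Real.log (Stirling.stirlingSeq m) / m) atTop (nhds 0) :=
    h1.div_atTop tendsto_natCast_atTop_atTop
  have h3 : Tendsto (fun x : ℝ => Real.log x / x) atTop (nhds 0) :=
    Real.isLittleO_log_id_atTop.tendsto_div_nhds_zero
  have h4 : Tendsto (fun m : ℕ => (2 * (m:ℝ))) atTop atTop :=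
    (tendsto_natCast_atTop_atTop (R := ℝ)).const_mul_atTop (by norm_num)
  have h5 : Tendsto (fun m : ℕ => Real.log (2 * (m:ℝ)) / (2 * m)) atTop (nhds 0) := h3.comp h4
  have key : Tendsto (fun m : ℕ => Real.log (Stirling.stirlingSeq m) / m
      + Real.log (2 * (m:ℝ)) / (2 * m)) atTop (nhds 0) := by
    simpa using h2.add h5
  refine key.congr' ?_
  filter_upwards [eventually_ge_atTop 1] with m hm
  have hm0 : (0:ℝ) < m := by exact_mod_cast hm
  have hf := Stirling.log_stirlingSeq_formula m
  have hlm : Real.log ((m:ℝ) / Real.exp 1) = Real.log m - 1 := by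
    rw [Real.log_div hm0.ne' (Real.exp_ne_zero 1), Real.log_exp]
  rw [hlm] at hf
  rw [hf]
  field_simp
  ring

lemma ratioL (p : ℝ) (hp0 : 0 ≤ p) :
    Filter.Tendsto (fun n : ℕ => (⌊p * n⌋₊ : ℝ) / n) Filter.atTop (nhds p) := by
  have lo : Tendsto (fun n : ℕ => (p * n - 1) / n) atTop (nhds p) := by
    have h : Tendsto (fun n : ℕ => p - 1 / (n:ℝ)) atTop (nhds (p - 0)) :=
      tendsto_const_nhds.sub tendsto_one_div_atTop_nhds_zero_nat
    rw [sub_zero] at h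
    refine h.congr' ?_
    filter_upwards [eventually_ge_atTop 1] with n hn
    have hn0 : (0:ℝ) < n := by exact_mod_cast hn
    field_simp
  have hi : Tendsto (fun n : ℕ => p * (n:ℝ) / n) atTop (nhds p) := by
    have h : Tendsto (fun _ : ℕ => p) atTop (nhds p) := tendsto_const_nhds
    refine h.congr' ?_
    filter_upwards [eventually_ge_atTop 1] with n hn
    have hn0 : (0:ℝ) < n := by exact_mod_cast hn
    field_simp
  refine tendsto_of_tendsto_of_tendsto_of_le_of_le' lo hi ?_ ?_
  · filter_upwards [eventually_ge_atTop 1] with n hn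
    have hn0 : (0:ℝ) < n := by exact_mod_cast hn
    gcongr
    exact (Nat.sub_one_lt_floor (p * n)).le
  · filter_upwards [eventually_ge_atTop 1] with n hn
    have hn0 : (0:ℝ) < n := by exact_mod_cast hn
    gcongr
    exact Nat.floor_le (by positivity)

lemma floorTop (p : ℝ) (hp0 : 0 < p) :
    Filter.Tendsto (fun n : ℕ => ⌊p * n⌋₊) Filter.atTop Filter.atTop := by
  have h : Tendsto (fun n : ℕ => p * (n:ℝ)) atTop atTop :=
    (tendsto_natCast_atTop_atTop (R := ℝ)).const_mul_atTop hp0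
  refine tendsto_atTop.2 fun b => ?_
  filter_upwards [h.eventually_ge_atTop (b:ℝ)] with n hn
  exact Nat.le_floor hn


/-- For fixed `d ≥ 1` and `p ∈ [0,1]`,
`(1/(2n)) log [ C(n,⌊pn⌋)² · ⌊pn⌋! · (2d/n)^⌊pn⌋ ]` converges as `n → ∞` to
`(1/2)(-p log p - 2(1-p)log(1-p) + p log(2d) - p)`
(with the convention `0 log 0 = 0`, realized by `Real.log 0 = 0`). -/
theorem stmt14 (d : ℕ) (hd : 1 ≤ d) (p : ℝ) (hp : p ∈ Set.Icc (0 : ℝ) 1) :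
    Filter.Tendsto (fun n : ℕ =>
        (1 / (2 * (n : ℝ))) * Real.log ((Nat.choose n ⌊p * n⌋₊ : ℝ) ^ 2
          * (Nat.factorial ⌊p * n⌋₊) * (2 * (d : ℝ) / n) ^ ⌊p * n⌋₊))
      Filter.atTop
      (nhds ((1 / 2) * (-(p * Real.log p) - 2 * (1 - p) * Real.log (1 - p)
        + p * Real.log (2 * d) - p))) := by
  have SL := SL
  have ratioL := ratioL p hp.1
  have floorTop := fun h => floorTop p h

  obtain ⟨hp0, hp1⟩ := hp
  have hd0 : (0:ℝ) < 2 * d := by positivity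
  rcases eq_or_lt_of_le hp0 with h0 | h0
  · -- p = 0
    subst h0
    have : ((1:ℝ) / 2) * (-(0 * Real.log 0) - 2 * (1 - 0) * Real.log (1 - 0)
        + 0 * Real.log (2 * d) - 0) = 0 := by norm_num
    rw [this]
    have : (fun n : ℕ =>
        (1 / (2 * (n : ℝ))) * Real.log ((Nat.choose n ⌊(0:ℝ) * n⌋₊ : ℝ) ^ 2
          * (Nat.factorial ⌊(0:ℝ) * n⌋₊) * (2 * (d : ℝ) / n) ^ ⌊(0:ℝ) * n⌋₊))
        = fun _ : ℕ => (0:ℝ) := by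
      funext n
      simp [zero_mul, Nat.floor_zero]
    rw [this]
    exact tendsto_const_nhds
  rcases eq_or_lt_of_le hp1 with h1 | h1
  · -- p = 1
    subst h1
    have hG : Tendsto (fun n : ℕ =>
        ((Real.log n.factorial - n * Real.log n + n) / n) / 2 - 1/2 + Real.log (2*d) / 2)
        atTop (nhds (0/2 - 1/2 + Real.log (2*d)/2)) :=
      ((SL.div_const 2).sub_const (1/2)).add_const _
    have hval : (0:ℝ)/2 - 1/2 + Real.log (2*d)/2
        = (1 / 2) * (-(1 * Real.log 1) - 2 * (1 - 1) * Real.log (1 - 1)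
          + 1 * Real.log (2 * d) - 1) := by
      simp [Real.log_one]; ring
    rw [hval] at hG
    refine hG.congr' ?_
    filter_upwards [eventually_ge_atTop 1] with n hn
    have hn0 : (0:ℝ) < n := by exact_mod_cast hn
    have hnf0 : (0:ℝ) < (n.factorial : ℝ) := by exact_mod_cast n.factorial_pos
    have hfl : ⌊(1:ℝ) * n⌋₊ = n := by simp
    rw [hfl, Nat.choose_self]
    have hexp : Real.log (((1:ℕ):ℝ) ^ 2 * (n.factorial : ℝ) * (2 * (d:ℝ) / n) ^ n)
        = Real.log n.factorial + n * (Real.log (2 * d) - Real.log n) := by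
      rw [Nat.cast_one, one_pow, one_mul, Real.log_mul hnf0.ne' (by positivity),
        Real.log_pow, Real.log_div (by positivity) hn0.ne']
    rw [hexp]
    field_simp
    ring
  -- 0 < p < 1
  set k : ℕ → ℕ := fun n => ⌊p * n⌋₊ with hk
  set m : ℕ → ℕ := fun n => n - k n with hm
  have hkTop : Tendsto k atTop atTop := floorTop h0
  have hkn : ∀ n : ℕ, k n ≤ n := by
    intro n
    have : ⌊p * n⌋₊ ≤ ⌊(n:ℝ)⌋₊ := Nat.floor_le_floor (by nlinarith [Nat.cast_nonneg (α := ℝ) n])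
    simpa using this
  have hratio2 : Tendsto (fun n : ℕ => ((m n : ℝ)) / n) atTop (nhds (1 - p)) := by
    have : Tendsto (fun n : ℕ => 1 - (k n : ℝ) / n) atTop (nhds (1 - p)) :=
      tendsto_const_nhds.sub ratioL
    refine this.congr' ?_
    filter_upwards [eventually_ge_atTop 1] with n hn
    have hn0 : (0:ℝ) < n := by exact_mod_cast hn
    rw [hm]
    push_cast [Nat.cast_sub (hkn n)]
    field_simp
  have hmTop : Tendsto m atTop atTop := by
    refine tendsto_atTop.2 fun b => ?_
    have hb : Tendsto (fun n : ℕ => (1 - p) * n) atTop atTop :=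
      (tendsto_natCast_atTop_atTop (R := ℝ)).const_mul_atTop (by linarith)
    filter_upwards [hb.eventually_ge_atTop (b:ℝ)] with n hn
    have : (b : ℝ) ≤ (m n : ℝ) := by
      push_cast [hm, Nat.cast_sub (hkn n)]
      have := Nat.floor_le (by positivity : (0:ℝ) ≤ p * n)
      simp only [hk]
      nlinarith
    exact_mod_cast this
  -- the limit function
  have hSn : Tendsto (fun n : ℕ => (Real.log n.factorial - n * Real.log n + n) / n) atTop (nhds 0) := SL
  have hSk : Tendsto (fun n : ℕ => (Real.log (k n).factorial - (k n) * Real.log (k n) + (k n)) / (k n)) atTop (nhds 0) := SL.comp hkTop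
  have hSm : Tendsto (fun n : ℕ => (Real.log (m n).factorial - (m n) * Real.log (m n) + (m n)) / (m n)) atTop (nhds 0) := SL.comp hmTop
  have hlogr : Tendsto (fun n : ℕ => Real.log ((k n : ℝ) / n)) atTop (nhds (Real.log p)) :=
    ((Real.continuousAt_log h0.ne').tendsto).comp ratioL
  have hlogr2 : Tendsto (fun n : ℕ => Real.log ((m n : ℝ) / n)) atTop (nhds (Real.log (1 - p))) :=
    ((Real.continuousAt_log (by linarith : (1:ℝ) - p ≠ 0)).tendsto).comp hratio2
  have hG : Tendsto (fun n : ℕ =>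
      (Real.log n.factorial - n * Real.log n + n) / n
      - ((Real.log (k n).factorial - (k n) * Real.log (k n) + (k n)) / (k n)) * ((k n : ℝ)/n) / 2
      - ((Real.log (m n).factorial - (m n) * Real.log (m n) + (m n)) / (m n)) * ((m n : ℝ)/n)
      + (-(((k n : ℝ)/n)/2) * Real.log ((k n : ℝ)/n) - ((m n : ℝ)/n) * Real.log ((m n : ℝ)/n)
        + (((k n : ℝ)/n)/2) * Real.log (2 * d) - ((k n : ℝ)/n)/2)) atTop
      (nhds (0 - 0 * p / 2 - 0 * (1 - p)
        + (-(p/2) * Real.log p - (1 - p) * Real.log (1 - p) + (p/2) * Real.log (2*d) - p/2))) := by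
    refine (((hSn.sub ((hSk.mul ratioL).div_const 2)).sub (hSm.mul hratio2)).add ?_)
    refine ((((((ratioL.div_const 2).neg.mul hlogr)).sub (hratio2.mul hlogr2)).add
      ((ratioL.div_const 2).mul_const (Real.log (2*d)))).sub (ratioL.div_const 2))
  have hGval : (0:ℝ) - 0 * p / 2 - 0 * (1 - p)
        + (-(p/2) * Real.log p - (1 - p) * Real.log (1 - p) + (p/2) * Real.log (2*d) - p/2)
      = (1 / 2) * (-(p * Real.log p) - 2 * (1 - p) * Real.log (1 - p)
        + p * Real.log (2 * d) - p) := by ring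
  rw [hGval] at hG
  refine hG.congr' ?_
  filter_upwards [hkTop.eventually_ge_atTop 1, hmTop.eventually_ge_atTop 1] with n hk1 hm1
  have hkn' := hkn n
  have hn1 : 1 ≤ n := le_trans hk1 hkn'
  have hn0 : (0:ℝ) < n := by exact_mod_cast hn1
  have hk0 : (0:ℝ) < k n := by exact_mod_cast hk1
  have hm0 : (0:ℝ) < m n := by exact_mod_cast hm1
  have hmc : (m n : ℝ) = (n : ℝ) - k n := by rw [hm]; push_cast [Nat.cast_sub hkn']; ring
  have hC0 : (0:ℝ) < (n.choose (k n) : ℝ) := by exact_mod_cast Nat.choose_pos hkn'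
  have hkf0 : (0:ℝ) < ((k n).factorial : ℝ) := by exact_mod_cast (k n).factorial_pos
  have hmf0 : (0:ℝ) < ((m n).factorial : ℝ) := by exact_mod_cast (m n).factorial_pos
  have hnf0 : (0:ℝ) < (n.factorial : ℝ) := by exact_mod_cast n.factorial_pos
  -- expand logs
  have hlogC : Real.log n.factorial = Real.log (n.choose (k n)) + Real.log (k n).factorial
      + Real.log (m n).factorial := by
    have h := Nat.choose_mul_factorial_mul_factorial hkn'
    have hc : ((n.choose (k n) : ℝ)) * ((k n).factorial) * ((m n).factorial) = (n.factorial : ℝ) := by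
      exact_mod_cast h
    rw [← hc, Real.log_mul (by positivity) hmf0.ne', Real.log_mul hC0.ne' hkf0.ne']
  have hexp : Real.log ((n.choose (k n) : ℝ) ^ 2 * ((k n).factorial : ℝ) * (2 * (d:ℝ) / n) ^ (k n))
      = 2 * Real.log (n.choose (k n)) + Real.log (k n).factorial
        + (k n) * (Real.log (2 * d) - Real.log n) := by
    rw [Real.log_mul (by positivity) (by positivity), Real.log_mul (by positivity) hkf0.ne',
      Real.log_pow, Real.log_pow, Real.log_div (by positivity) hn0.ne']
    push_cast
    ring
  have hlk : Real.log ((k n : ℝ) / n) = Real.log (k n) - Real.log n := Real.log_div hk0.ne' hn0.ne'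
  have hlm2 : Real.log ((m n : ℝ) / n) = Real.log (m n) - Real.log n := Real.log_div hm0.ne' hn0.ne'
  rw [hexp, hlogC, hlk, hlm2]
  field_simp
  ring_nf
  rw [hmc]
  ring
end
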